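/- Let A be a k×k matrix over Λₙ such that for every t ∈ (ℂˣ)ⁿ the complex matrix ev_t(A) is invertible, and such that ev_𝟙(A) is the identity matrix. Then the determinant of A is a monomial with coefficient one: det A = x^m = x₁^{m₁}⋯xₙ^{mₙ} for some m ∈ ℤⁿ. -/

import Mathlib

open scoped BigOperators


lemma units_trivial {A : Type*} [AddCommGroup A] [LinearOrder A] [IsOrderedAddMonoid A]
    {u v : AddMonoidAlgebra ℂ A} {w : A}
    (h : u * v = AddMonoidAlgebra.single w 1) :
    ∃ b c, u = AddMonoidAlgebra.single b c := by
  have hne : (AddMonoidAlgebra.single w (1:ℂ)) ≠ 0 := by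
    simp [AddMonoidAlgebra.single_eq_zero]
  have hu : u ≠ 0 := by rintro rfl; simp [h.symm] at hne
  have hv : v ≠ 0 := by rintro rfl; simp [h.symm] at hne
  have hus : u.coeff.support.Nonempty :=
    Finsupp.support_nonempty_iff.mpr (mt AddMonoidAlgebra.coeff_eq_zero.mp hu)
  have hvs : v.coeff.support.Nonempty :=
    Finsupp.support_nonempty_iff.mpr (mt AddMonoidAlgebra.coeff_eq_zero.mp hv)
  have key : ∀ (x : A), x ∈ u.coeff.support → ∀ (y : A), y ∈ v.coeff.support →
      (∀ x' ∈ u.coeff.support, x' ≠ x → ∀ y' ∈ v.coeff.support, x' + y' ≠ x + y) →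
      (∀ y' ∈ v.coeff.support, y' ≠ y → x + y' ≠ x + y) →
      x + y = w := by
    intro x hx y hy hmax hmax2
    have : (u * v).coeff (x + y) = u.coeff x * v.coeff y := by
      rw [AddMonoidAlgebra.coeff_mul]
      simp only [Finsupp.sum]
      rw [Finset.sum_eq_single_of_mem x hx ?_]
      · rw [Finset.sum_eq_single_of_mem y hy ?_]
        · simp
        · intro y' hy' hne'
          exact if_neg (hmax2 y' hy' hne')
      · intro x' hx' hne'
        apply Finset.sum_eq_zero
        intro y' hy'
        exact if_neg (hmax x' hx' hne' y' hy')
    have hne0 : u.coeff x * v.coeff y ≠ 0 :=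
      mul_ne_zero (Finsupp.mem_support_iff.mp hx) (Finsupp.mem_support_iff.mp hy)
    rw [← this, h] at hne0
    by_contra hxy
    rw [AddMonoidAlgebra.coeff_single, Finsupp.single_apply, if_neg (fun hh => hxy hh.symm)] at hne0
    exact hne0 rfl
  set b := u.coeff.support.max' hus with hb
  set b' := u.coeff.support.min' hus with hb'
  set c := v.coeff.support.max' hvs with hc
  set c' := v.coeff.support.min' hvs with hc'
  have hbc : b + c = w := by
    refine key b (u.coeff.support.max'_mem hus) c (v.coeff.support.max'_mem hvs) ?_ ?_
    · intro x' hx' hne' y' hy'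
      have h1 : x' < b := lt_of_le_of_ne (u.coeff.support.le_max' _ hx') hne'
      have h2 : y' ≤ c := v.coeff.support.le_max' _ hy'
      exact ne_of_lt (add_lt_add_of_lt_of_le h1 h2)
    · intro y' hy' hne'
      have h2 : y' < c := lt_of_le_of_ne (v.coeff.support.le_max' _ hy') hne'
      exact ne_of_lt (add_lt_add_right h2 b)
  have hbc' : b' + c' = w := by
    refine key b' (u.coeff.support.min'_mem hus) c' (v.coeff.support.min'_mem hvs) ?_ ?_
    · intro x' hx' hne' y' hy'
      have h1 : b' < x' := lt_of_le_of_ne (u.coeff.support.min'_le _ hx') (Ne.symm hne')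
      have h2 : c' ≤ y' := v.coeff.support.min'_le _ hy'
      exact (ne_of_lt (add_lt_add_of_lt_of_le h1 h2)).symm
    · intro y' hy' hne'
      have h2 : c' < y' := lt_of_le_of_ne (v.coeff.support.min'_le _ hy') (Ne.symm hne')
      exact (ne_of_lt (add_lt_add_right h2 b')).symm
  have hbb : b = b' := by
    have h1 : b' ≤ b := u.coeff.support.min'_le _ (u.coeff.support.max'_mem hus)
    have h2 : c' ≤ c := v.coeff.support.min'_le _ (v.coeff.support.max'_mem hvs)
    have : b + c' ≤ b + c := add_le_add_right h2 b
    rw [hbc, ← hbc'] at this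
    have : b ≤ b' := by
      have := add_le_add_right (le_of_add_le_add_left
        (by rwa [add_comm b' c', add_comm b c'] at this : c' + b ≤ c' + b')) (0:A)
      simpa using this
    exact le_antisymm this h1 |>.symm ▸ rfl
  refine ⟨b, u.coeff b, ?_⟩
  apply AddMonoidAlgebra.coeff_injective
  rw [AddMonoidAlgebra.coeff_single, Finsupp.eq_single_iff]
  refine ⟨fun x hx => ?_, rfl⟩
  have h1 : x ≤ b := u.coeff.support.le_max' _ hx
  have h2 : b' ≤ x := u.coeff.support.min'_le _ hx
  rw [← hbb] at h2
  simp [le_antisymm h1 h2]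


noncomputable instance lexInst (n : ℕ) : IsOrderedAddMonoid (Lex (Fin n → ℤ)) :=
  inferInstance

lemma single_of_isUnit {n : ℕ} {p : AddMonoidAlgebra ℂ (Fin n → ℤ)} (h : IsUnit p) :
    ∃ b c, p = AddMonoidAlgebra.single b c := by
  obtain ⟨u, rfl⟩ := h
  have hmul : (u : AddMonoidAlgebra ℂ (Fin n → ℤ)) * ↑u⁻¹
      = AddMonoidAlgebra.single (0 : Fin n → ℤ) (1:ℂ) := by
    rw [u.mul_inv]; rfl
  let e : (Fin n → ℤ) ≃+ Lex (Fin n → ℤ) := { toLex with map_add' := fun _ _ => rfl }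
  let Φ := AddMonoidAlgebra.domCongr ℂ ℂ e
  have h2 : Φ ↑u * Φ ↑u⁻¹ = AddMonoidAlgebra.single (toLex (0 : Fin n → ℤ)) (1:ℂ) := by
    rw [← map_mul, hmul]
    simp [Φ, AddMonoidAlgebra.domCongr_single]
  obtain ⟨b, c, hbc⟩ := units_trivial (A := Lex (Fin n → ℤ)) h2
  refine ⟨ofLex b, c, ?_⟩
  apply Φ.injective
  rw [hbc]
  simp [Φ, AddMonoidAlgebra.domCongr_single]
  rfl


/-- The `ℂ`-algebra homomorphism `ev t : ℂ[x₁^{±1},…,xₙ^{±1}] → ℂ` evaluating a Laurent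
polynomial at the point `t ∈ (ℂˣ)ⁿ`; it sends the basis monomial `x^a` to `∏ j, t j ^ a j`. -/
noncomputable def ev (n : ℕ) (t : Fin n → ℂˣ) :
    AddMonoidAlgebra ℂ (Fin n → ℤ) →ₐ[ℂ] ℂ :=
  AddMonoidAlgebra.lift ℂ ℂ (Fin n → ℤ) <|
    (Units.coeHom ℂ).comp
      { toFun := fun a => ∏ j, (t j) ^ (Multiplicative.toAdd a j)
        map_one' := by simp
        map_mul' := fun a b => by
          simp [toAdd_mul, Pi.add_apply, zpow_add, Finset.prod_mul_distrib] }

lemma ev_single (n : ℕ) (t : Fin n → ℂˣ) (a : Fin n → ℤ) (c : ℂ) :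
    ev n t (AddMonoidAlgebra.single a c) = c * ∏ j, (t j : ℂ) ^ (a j) := by
  simp [ev, AddMonoidAlgebra.lift_single]

noncomputable def phi (n : ℕ) : MvPolynomial (Fin n) ℂ →ₐ[ℂ] AddMonoidAlgebra ℂ (Fin n → ℤ) :=
  MvPolynomial.aeval (fun j : Fin n => AddMonoidAlgebra.single (Pi.single j (1:ℤ)) (1:ℂ))

lemma phi_monomial (n : ℕ) (s : Fin n →₀ ℕ) (c : ℂ) :
    phi n (MvPolynomial.monomial s c)
      = AddMonoidAlgebra.single (fun j => (s j : ℤ)) c := by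
  rw [phi, MvPolynomial.aeval_monomial]
  have h1 : ∀ (j : Fin n) (k : ℕ),
      (AddMonoidAlgebra.single (Pi.single j (1:ℤ) : Fin n → ℤ) (1:ℂ)) ^ k
        = AddMonoidAlgebra.single (Pi.single j (k:ℤ)) (1:ℂ) := by
    intro j k
    rw [AddMonoidAlgebra.single_pow (M := Fin n → ℤ)]
    congr 1
    · funext i
      simp [Pi.single_apply]
    · simp
  have h2 : (s.prod fun j k => (AddMonoidAlgebra.single (Pi.single j (1:ℤ) : Fin n → ℤ) (1:ℂ)) ^ k)
      = AddMonoidAlgebra.single (fun j => (s j : ℤ)) 1 := by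
    rw [Finsupp.prod]
    simp_rw [h1]
    rw [AddMonoidAlgebra.prod_single]
    congr 1
    · rw [Finset.sum_subset (Finset.subset_univ s.support)
        (fun x _ hx => by simp [Finsupp.notMem_support_iff.mp hx])]
      exact Finset.univ_sum_single _
    · simp
  rw [h2]
  rw [show (algebraMap ℂ (AddMonoidAlgebra ℂ (Fin n → ℤ))) c = AddMonoidAlgebra.single 0 c from rfl]
  rw [AddMonoidAlgebra.single_mul_single]
  simp

lemma ev_phi (n : ℕ) (t : Fin n → ℂˣ) (q : MvPolynomial (Fin n) ℂ) :
    ev n t (phi n q) = MvPolynomial.eval (fun j => (t j : ℂ)) q := by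
  have : (ev n t).comp (phi n) = MvPolynomial.aeval (fun j => (t j : ℂ)) := by
    rw [phi, MvPolynomial.comp_aeval]
    congr 1
    funext j
    rw [ev_single]
    simp [Pi.single_apply]
  calc ev n t (phi n q) = ((ev n t).comp (phi n)) q := rfl
    _ = MvPolynomial.aeval (fun j => (t j : ℂ)) q := by rw [this]
    _ = _ := by rw [← MvPolynomial.coe_aeval_eq_eval]; rfl

lemma phi_def (n : ℕ) : phi n = MvPolynomial.aeval
    (fun j : Fin n => AddMonoidAlgebra.single (Pi.single j (1:ℤ)) (1:ℂ)) := rfl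

lemma isUnit_single (n : ℕ) (a : Fin n → ℤ) :
    IsUnit (AddMonoidAlgebra.single a (1:ℂ)) := by
  refine ⟨⟨AddMonoidAlgebra.single a 1, AddMonoidAlgebra.single (-a) 1, ?_, ?_⟩, rfl⟩ <;>
  · rw [AddMonoidAlgebra.single_mul_single]
    simp [AddMonoidAlgebra.one_def]

lemma isUnit_of_never_zero {n : ℕ} {p : AddMonoidAlgebra ℂ (Fin n → ℤ)}
    (hp : ∀ t : Fin n → ℂˣ, ev n t p ≠ 0) : IsUnit p := by
  classical
  set d : Fin n → ℤ := fun j => ((∑ b ∈ p.coeff.support, (-(b j)).toNat : ℕ) : ℤ) with hd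
  have hdpos : ∀ a ∈ p.coeff.support, ∀ j, 0 ≤ d j + a j := by
    intro a ha j
    have h1 : (-(a j)).toNat ≤ ∑ b ∈ p.coeff.support, (-(b j)).toNat :=
      Finset.single_le_sum (f := fun b => (-(b j)).toNat) (fun _ _ => Nat.zero_le _) ha
    have h2 : -(a j) ≤ ((-(a j)).toNat : ℤ) := Int.self_le_toNat _
    have h3 : -(a j) ≤ d j := h2.trans (Int.ofNat_le.mpr h1)
    linarith
  set q : MvPolynomial (Fin n) ℂ :=
    ∑ a ∈ p.coeff.support, MvPolynomial.monomial
      (Finsupp.equivFunOnFinite.symm fun j => (d j + a j).toNat) (p.coeff a) with hq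
  have hterm : ∀ a ∈ p.coeff.support,
      phi n (MvPolynomial.monomial (Finsupp.equivFunOnFinite.symm fun j => (d j + a j).toNat) (p.coeff a))
        = AddMonoidAlgebra.single (d + a) (p.coeff a) := by
    intro a ha
    rw [phi_monomial]
    congr 1
    funext j
    show ((d j + a j).toNat : ℤ) = d j + a j
    exact Int.toNat_of_nonneg (hdpos a ha j)
  have hphiq : phi n q = AddMonoidAlgebra.single d 1 * p := by
    rw [hq, map_sum, Finset.sum_congr rfl hterm]
    conv_rhs => rw [← AddMonoidAlgebra.sum_coeff_single p]
    rw [Finsupp.sum, Finset.mul_sum]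
    refine Finset.sum_congr rfl fun a ha => ?_
    rw [AddMonoidAlgebra.single_mul_single, one_mul]
  have hqz : ∀ z : Fin n → ℂ, MvPolynomial.eval z q = 0 → ∃ j, z j = 0 := by
    intro z hz
    by_contra hcon
    push_neg at hcon
    set t : Fin n → ℂˣ := fun j => Units.mk0 (z j) (hcon j) with ht
    have h1 := ev_phi n t q
    rw [hphiq, map_mul, ev_single] at h1
    have h2 : MvPolynomial.eval (fun j => ((t j : ℂ))) q = MvPolynomial.eval z q := by
      congr 1
    have h3 : (1 : ℂ) * ∏ j, (t j : ℂ) ^ d j ≠ 0 := by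
      rw [one_mul]
      exact Finset.prod_ne_zero_iff.mpr fun j _ => zpow_ne_zero _ (Units.ne_zero _)
    rw [h2, hz] at h1
    exact (mul_ne_zero h3 (hp t)) h1
  have hrad : (∏ j, MvPolynomial.X j : MvPolynomial (Fin n) ℂ) ∈ (Ideal.span {q}).radical := by
    rw [← MvPolynomial.vanishingIdeal_zeroLocus_eq_radical (K := ℂ)]
    rw [MvPolynomial.mem_vanishingIdeal_iff]
    intro z hzl
    have hz : MvPolynomial.eval z q = 0 :=
      (MvPolynomial.mem_zeroLocus_iff.mp hzl) q (Ideal.mem_span_singleton_self q)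
    obtain ⟨j, hj⟩ := hqz z hz
    rw [map_prod]
    exact Finset.prod_eq_zero (Finset.mem_univ j) (by simpa using hj)
  obtain ⟨N, hN⟩ := hrad
  obtain ⟨r, hr⟩ := Ideal.mem_span_singleton'.mp hN
  have happ : phi n r * phi n q = (AddMonoidAlgebra.single (fun _ => (1:ℤ)) (1:ℂ)) ^ N := by
    rw [← map_mul, hr, map_pow]
    congr 1
    rw [phi_def, map_prod]
    simp_rw [MvPolynomial.aeval_X]
    rw [AddMonoidAlgebra.prod_single]
    congr 1
    · exact Finset.univ_sum_single (fun _ => (1:ℤ))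
    · simp
  have hq_unit : IsUnit (phi n q) :=
    isUnit_of_mul_isUnit_right (by rw [happ]; exact (isUnit_single n _).pow N)
  rw [hphiq] at hq_unit
  have hrw : p = AddMonoidAlgebra.single (-d) 1 * (AddMonoidAlgebra.single d 1 * p) := by
    rw [← mul_assoc, AddMonoidAlgebra.single_mul_single]
    simp only [neg_add_cancel, one_mul]
    rw [show AddMonoidAlgebra.single (0 : Fin n → ℤ) (1:ℂ) = 1 from rfl, one_mul]
  rw [hrw]
  exact (isUnit_single n (-d)).mul hq_unit

theorem stmt_4 (n k : ℕ) (A : Matrix (Fin k) (Fin k) (AddMonoidAlgebra ℂ (Fin n → ℤ)))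
    (hinv : ∀ t : Fin n → ℂˣ, IsUnit (A.map (ev n t)))
    (hone : A.map (ev n fun _ => 1) = 1) :
    ∃ m : Fin n → ℤ, A.det = AddMonoidAlgebra.single m (1 : ℂ) := by
  have hdet : ∀ t : Fin n → ℂˣ, ev n t A.det = (A.map (ev n t)).det := by
    intro t
    exact RingHom.map_det (ev n t).toRingHom A
  have hptz : ∀ t : Fin n → ℂˣ, ev n t A.det ≠ 0 := by
    intro t
    rw [hdet t]
    exact (Matrix.isUnit_iff_isUnit_det _ |>.mp (hinv t)).ne_zero
  obtain ⟨m, c, hmc⟩ := single_of_isUnit (isUnit_of_never_zero hptz)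
  have hc : c = 1 := by
    have h1 : ev n (fun _ => 1) A.det = 1 := by
      rw [hdet, hone, Matrix.det_one]
    rw [hmc, ev_single] at h1
    simpa using h1
  exact ⟨m, by rw [hmc, hc]⟩
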